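/- arXiv:1007.3648 — 3 statements merged into one kernel-verified Lean document; each statement's English description precedes it below -/
import Mathlib

section
/- Let (R, θ) be an ID-ring of characteristic p > 0 and ℓ ∈ ℕ. Then R_ℓ := ⋂_{0 < j < p^ℓ} Ker(θ^(j)) is a subring of R containing the image of the p^ℓ-th power Frobenius map, i.e. r^{p^ℓ} ∈ R_ℓ for every r ∈ R. -/
/-- The `i`-th component `θ^(i)` of a map `θ : R → R[[T]]`. -/
noncomputable def iterDeriv {R : Type*} [CommRing R] (θ : R →+* PowerSeries R) (i : ℕ) (r : R) : R :=
  PowerSeries.coeff i (θ r)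

/-- `θ` is an iterative derivation: `θ^(0) = id` and
`θ^(i) ∘ θ^(j) = binom(i+j, i) · θ^(i+j)`. -/
def IsIterativeDerivation {R : Type*} [CommRing R] (θ : R →+* PowerSeries R) : Prop :=
  (∀ r, iterDeriv θ 0 r = r) ∧
  ∀ i j r, iterDeriv θ i (iterDeriv θ j r) = (i + j).choose i • iterDeriv θ (i + j) r

/-!
`R_ℓ` is the preimage under the ring homomorphism `θ` of the subring `R + X^(p^ℓ) R⟦X⟧` of
power series whose coefficients in degrees `0 < j < p^ℓ` vanish; in particular it is a subring.
If `f = θ r` has constant coefficient `c`, then `X ∣ f - C c`, and in characteristic `p` the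
Frobenius power gives `θ (r ^ p^ℓ) - C (c ^ p^ℓ) = (f - C c) ^ p^ℓ`, which is divisible by
`X ^ p^ℓ`.
-/

namespace PowerSeries

variable {R : Type*} [CommRing R]

variable (R) in
def constAddXPow (n : ℕ) : Subring R⟦X⟧ where
  carrier := {f | ∀ j, 0 < j → j < n → coeff j f = 0}
  mul_mem' {f g} hf hg j hj hjn := by
    rw [coeff_mul]
    refine Finset.sum_eq_zero fun ⟨i, k⟩ hik => ?_
    rw [Finset.HasAntidiagonal.mem_antidiagonal] at hik
    rcases Nat.eq_zero_or_pos i with rfl | hi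
    · rw [hg k (by omega) (by omega), mul_zero]
    · rw [hf i hi (by omega), zero_mul]
  one_mem' j hj _ := by simp [coeff_one, hj.ne']
  add_mem' hf hg j hj hjn := by simp [hf j hj hjn, hg j hj hjn]
  zero_mem' := by simp
  neg_mem' hf j hj hjn := by simp [hf j hj hjn]

theorem mem_constAddXPow_iff {n : ℕ} {f : R⟦X⟧} :
    f ∈ constAddXPow R n ↔ X ^ n ∣ f - C (constantCoeff f) := by
  rw [X_pow_dvd_iff]
  refine forall_congr' fun j => ⟨fun hf hjn => ?_, fun hf hj hjn => ?_⟩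
  · rcases Nat.eq_zero_or_pos j with rfl | hj
    · simp
    · simp [coeff_C, hj.ne', hf hj hjn]
  · simpa [coeff_C, hj.ne'] using hf hjn

theorem pow_char_pow_mem_constAddXPow (p : ℕ) [Fact p.Prime] [CharP R p] (ℓ : ℕ) (f : R⟦X⟧) :
    f ^ p ^ ℓ ∈ constAddXPow R (p ^ ℓ) := by
  have : CharP R⟦X⟧ p := charP_of_injective_ringHom C_injective p
  have hX : X ∣ f - C (constantCoeff f) := X_dvd_iff.mpr (by simp)
  rw [mem_constAddXPow_iff, map_pow, map_pow, ← sub_pow_char_pow]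
  exact pow_dvd_pow_of_dvd hX _

end PowerSeries

theorem stmt2_general {R : Type*} [CommRing R] (p : ℕ) [Fact p.Prime] [CharP R p]
    (θ : R →+* PowerSeries R) (ℓ : ℕ) :
    ∃ S : Subring R,
      (S : Set R) = {r : R | ∀ j : ℕ, 0 < j → j < p ^ ℓ → iterDeriv θ j r = 0} ∧
      ∀ r : R, r ^ p ^ ℓ ∈ S :=
  ⟨(PowerSeries.constAddXPow R (p ^ ℓ)).comap θ, rfl, fun r => by
    simpa only [Subring.mem_comap, map_pow] using
      PowerSeries.pow_char_pow_mem_constAddXPow p ℓ (θ r)⟩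

/-- For an ID-ring of characteristic `p > 0`,
`R_ℓ = ⋂_{0 < j < p^ℓ} Ker θ^(j)` is a subring containing all `p^ℓ`-th powers. -/
theorem stmt2 {R : Type*} [CommRing R] (p : ℕ) [Fact p.Prime] [CharP R p]
    (θ : R →+* PowerSeries R) (hθ : IsIterativeDerivation θ) (ℓ : ℕ) :
    ∃ S : Subring R,
      (S : Set R) = {r : R | ∀ j : ℕ, 0 < j → j < p ^ ℓ → iterDeriv θ j r = 0} ∧
      ∀ r : R, r ^ p ^ ℓ ∈ S :=
  stmt2_general p θ ℓ
end

section
/- Let (R, θ) be an ID-ring of characteristic p > 0 and ℓ ∈ ℕ. Then for every r ∈ R_ℓ = ⋂_{0<j<p^ℓ} Ker(θ^(j)) and every k ∈ ℕ, one has θ^(k)(r) = 0 unless p^ℓ divides k; i.e. θ restricted to R_ℓ takes values in R[[T^{p^ℓ}]]. -/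
/-!
If `0 < s := k % p^ℓ < p^ℓ`, then `θ^(s)(r) = 0`, so
`0 = θ^(k-s)(θ^(s)(r)) = binom(k, s) θ^(k)(r)`. By Lucas' theorem `binom(k, s) ≡ 1 mod p`,
since the base-`p` digits of `s` are the last `ℓ` digits of `k` followed by zeros.
-/

/-- One digit at a time, via `binom(k, m) ≡ binom(k % p, m % p) · binom(k / p, m / p)`. -/
theorem Nat.choose_mod_prime_pow_modEq_one (p : ℕ) [Fact p.Prime] (ℓ k : ℕ) :
    k.choose (k % p ^ ℓ) ≡ 1 [MOD p] := by
  induction ℓ generalizing k with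
  | zero => rw [pow_zero, Nat.mod_one, Nat.choose_zero_right]
  | succ ℓ ih =>
    have hmod : k % p ^ (ℓ + 1) % p = k % p :=
      Nat.mod_mod_of_dvd k (dvd_pow_self p ℓ.succ_ne_zero)
    have hdiv : k % p ^ (ℓ + 1) / p = k / p % p ^ ℓ := by
      rw [pow_succ', Nat.mod_mul_right_div_self]
    calc k.choose (k % p ^ (ℓ + 1))
        ≡ (k % p).choose (k % p) * (k / p).choose (k / p % p ^ ℓ) [MOD p] := by
          simpa only [hmod, hdiv] using
            Choose.choose_modEq_choose_mod_mul_choose_div_nat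
              (p := p) (n := k) (k := k % p ^ (ℓ + 1))
      _ ≡ 1 * 1 [MOD p] := by
          rw [Nat.choose_self]
          exact Nat.ModEq.mul_left 1 (ih (k / p))

theorem iterDeriv_zero_right {R : Type*} [CommRing R] (θ : R →+* PowerSeries R) (i : ℕ) :
    iterDeriv θ i 0 = 0 := by
  simp [iterDeriv]

theorem IsIterativeDerivation.choose_smul_iterDeriv_eq_zero {R : Type*} [CommRing R]
    {θ : R →+* PowerSeries R} (hθ : IsIterativeDerivation θ) {r : R} {s k : ℕ} (hsk : s ≤ k)
    (hs : iterDeriv θ s r = 0) : k.choose s • iterDeriv θ k r = 0 := by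
  have h := hθ.2 (k - s) s r
  rwa [hs, iterDeriv_zero_right, Nat.sub_add_cancel hsk, Nat.choose_symm hsk, eq_comm] at h

/-- On `R_ℓ`, the iterative derivation takes values in `R[[T^{p^ℓ}]]`:
`θ^(k)(r) = 0` unless `p^ℓ ∣ k`. -/
theorem stmt3 {R : Type*} [CommRing R] (p : ℕ) [Fact p.Prime] [CharP R p]
    (θ : R →+* PowerSeries R) (hθ : IsIterativeDerivation θ) (ℓ : ℕ) (r : R)
    (hr : ∀ j : ℕ, 0 < j → j < p ^ ℓ → iterDeriv θ j r = 0)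
    (k : ℕ) (hk : ¬ p ^ ℓ ∣ k) :
    iterDeriv θ k r = 0 := by
  have hs_pos : 0 < k % p ^ ℓ := Nat.pos_of_ne_zero fun h => hk (Nat.dvd_of_mod_eq_zero h)
  have hs_lt : k % p ^ ℓ < p ^ ℓ := Nat.mod_lt k (pow_pos (Fact.out : p.Prime).pos ℓ)
  have hchoose : (k.choose (k % p ^ ℓ) : R) = 1 := by
    simpa using CharP.natCast_eq_natCast' R p (Nat.choose_mod_prime_pow_modEq_one p ℓ k)
  simpa [nsmul_eq_mul, hchoose] using
    hθ.choose_smul_iterDeriv_eq_zero (Nat.mod_le k _) (hr _ hs_pos hs_lt)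
end

section
/- Let A = Σ_{k≥0} A_k T^k ∈ Mat_n(F[[T]]) with A_0 = 1_n, over an ID-field (F, θ). Suppose Y ∈ GL_n(E) for some ID-field extension E/F satisfies θ(Y) = AY (entrywise, i.e. θ^(k)(Y_{ij}) = (A_k Y)_{ij}). Then the iterativity condition binom(k+l, l) A_{k+l} = Σ_{i+j=l} θ^(i)(A_k) A_j for all k, l ≥ 0 holds automatically. -/
open Finset

section Leibniz

variable {R : Type*} [CommRing R] (θ : R →+* PowerSeries R)

theorem iterDeriv_sum {ι : Type*} (l : ℕ) (s : Finset ι) (f : ι → R) :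
    iterDeriv θ l (∑ x ∈ s, f x) = ∑ x ∈ s, iterDeriv θ l (f x) := by
  simp only [iterDeriv, map_sum]

theorem iterDeriv_mul (l : ℕ) (a b : R) :
    iterDeriv θ l (a * b) = ∑ q ∈ antidiagonal l, iterDeriv θ q.1 a * iterDeriv θ q.2 b := by
  simp only [iterDeriv, map_mul, PowerSeries.coeff_mul]

theorem Matrix.map_iterDeriv_mul {m n o : Type*} [Fintype n] (l : ℕ) (M : Matrix m n R)
    (N : Matrix n o R) :
    (M * N).map (iterDeriv θ l) =
      ∑ q ∈ antidiagonal l, M.map (iterDeriv θ q.1) * N.map (iterDeriv θ q.2) := by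
  ext i j
  simp only [Matrix.map_apply, Matrix.mul_apply, Matrix.sum_apply, iterDeriv_sum, iterDeriv_mul]
  exact Finset.sum_comm

theorem IsIterativeDerivation.map_iterDeriv_map_iterDeriv {θ : R →+* PowerSeries R}
    (hθ : IsIterativeDerivation θ) {m n : Type*} (k l : ℕ) (M : Matrix m n R) :
    (M.map (iterDeriv θ k)).map (iterDeriv θ l) = (k + l).choose l • M.map (iterDeriv θ (k + l)) := by
  ext i j
  simp only [Matrix.map_apply, Matrix.smul_apply, hθ.2, add_comm l k]

end Leibniz

section Extension

variable {F E : Type*} [CommRing F] [CommRing E] [Algebra F E]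
  {θF : F →+* PowerSeries F} {θE : E →+* PowerSeries E}

theorem iterDeriv_algebraMap
    (hext : ∀ x : F, θE (algebraMap F E x) = PowerSeries.map (algebraMap F E) (θF x))
    (p : ℕ) (x : F) : iterDeriv θE p (algebraMap F E x) = algebraMap F E (iterDeriv θF p x) := by
  simp only [iterDeriv, hext, PowerSeries.coeff_map]

theorem Matrix.map_algebraMap_map_iterDeriv
    (hext : ∀ x : F, θE (algebraMap F E x) = PowerSeries.map (algebraMap F E) (θF x))
    {m n : Type*} (p : ℕ) (M : Matrix m n F) :
    (M.map (algebraMap F E)).map (iterDeriv θE p) = (M.map (iterDeriv θF p)).map (algebraMap F E) := by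
  ext i j
  exact iterDeriv_algebraMap hext p (M i j)

end Extension

theorem stmt13_general {F E : Type*} [Field F] [Field E] [Algebra F E]
    (θF : F →+* PowerSeries F) (θE : E →+* PowerSeries E)
    (hE : IsIterativeDerivation θE)
    (hext : ∀ x : F, θE (algebraMap F E x) = PowerSeries.map (algebraMap F E) (θF x))
    (n : ℕ) (A : ℕ → Matrix (Fin n) (Fin n) F)
    (Y : Matrix (Fin n) (Fin n) E) (hY : IsUnit Y)
    (hsol : ∀ k : ℕ, Matrix.of (fun i j => iterDeriv θE k (Y i j)) =
      (A k).map (algebraMap F E) * Y) :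
    ∀ k l : ℕ, ((k + l).choose l : F) • A (k + l) =
      ∑ q ∈ Finset.HasAntidiagonal.antidiagonal l, (A k).map (iterDeriv θF q.1) * A q.2 := by
  intro k l
  let φ := (algebraMap F E).mapMatrix (m := Fin n)
  have hY_deriv : ∀ m, Y.map (iterDeriv θE m) = φ (A m) * Y := hsol
  refine Matrix.map_injective (algebraMap F E).injective (hY.mul_right_cancel ?_)
  calc φ (((k + l).choose l : F) • A (k + l)) * Y
      = (Y.map (iterDeriv θE k)).map (iterDeriv θE l) := by
        rw [hE.map_iterDeriv_map_iterDeriv, hY_deriv, Nat.cast_smul_eq_nsmul, map_nsmul,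
          smul_mul_assoc]
    _ = (φ (A k) * Y).map (iterDeriv θE l) := by rw [hY_deriv]
    _ = ∑ q ∈ antidiagonal l, φ ((A k).map (iterDeriv θF q.1)) * (φ (A q.2) * Y) := by
        rw [Matrix.map_iterDeriv_mul]
        simp only [φ, RingHom.mapMatrix_apply, Matrix.map_algebraMap_map_iterDeriv hext, hY_deriv]
    _ = _ := by
        simp only [← Matrix.mul_assoc, ← map_mul, ← Finset.sum_mul, ← map_sum]
        rfl

/-- If `Y ∈ GL_n(E)` satisfies `θ(Y) = AY` with `A_0 = 1`, then the
iterativity condition `binom(k+l,l) A_{k+l} = Σ_{i+j=l} θ^(i)(A_k) A_j`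
holds automatically. -/
theorem stmt13 {F E : Type*} [Field F] [Field E] [Algebra F E]
    (θF : F →+* PowerSeries F) (θE : E →+* PowerSeries E)
    (hF : IsIterativeDerivation θF) (hE : IsIterativeDerivation θE)
    (hext : ∀ x : F, θE (algebraMap F E x) = PowerSeries.map (algebraMap F E) (θF x))
    (n : ℕ) (A : ℕ → Matrix (Fin n) (Fin n) F) (hA0 : A 0 = 1)
    (Y : Matrix (Fin n) (Fin n) E) (hY : IsUnit Y)
    (hsol : ∀ k : ℕ, Matrix.of (fun i j => iterDeriv θE k (Y i j)) =
      (A k).map (algebraMap F E) * Y) :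
    ∀ k l : ℕ, ((k + l).choose l : F) • A (k + l) =
      ∑ q ∈ Finset.HasAntidiagonal.antidiagonal l, (A k).map (iterDeriv θF q.1) * A q.2 :=
  stmt13_general θF θE hE hext n A Y hY hsol
end
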